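/- Let ρ_AB be a separable bipartite state on ℂ^{d_A} ⊗ ℂ^{d_B}, let {E^A_{α,k}} be an informationally complete (N_A,M_A)-POVM on ℂ^{d_A} with efficiency parameter x_A and {E^B_{β,l}} an informationally complete (N_B,M_B)-POVM on ℂ^{d_B} with efficiency parameter x_B, and let P(ρ_AB) be the (N_A M_A)×(N_B M_B) matrix with entries tr((E^A_{α,k} ⊗ E^B_{β,l}) ρ_AB). Then ‖P(ρ_AB)‖_tr ≤ √( ((d_A−1)(d_A² + M_A² x_A)/(d_A M_A (M_A−1))) · ((d_B−1)(d_B² + M_B² x_B)/(d_B M_B (M_B−1))) ). -/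

import Mathlib

/-!
A separable state `ρ = ∑ᵢ pᵢ ρᵢᴬ ⊗ ρᵢᴮ` factors the correlation matrix as `P = A Bᵀ`, where
`A (α, k) i = √pᵢ tr(Eᴬ_{α,k} ρᵢᴬ)` and `B` is built in the same way from `Eᴮ` and the `ρᵢᴮ`.
Hence `‖P‖_tr ≤ ‖A‖_F ‖B‖_F`, and `‖A‖_F² = ∑ᵢ pᵢ ∑_{α,k} |tr(Eᴬ_{α,k} ρᵢᴬ)|²` is an average of
single-state quantities.

For a single state `σ`, the centred effects `E_{α,k} - I/M` have Gram matrix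
`δ_{αβ} (M c δ_{kl} - c)` with `c = (x - d/M²)/(M - 1)`. Its largest eigenvalue is `M c`, so by
the dual Bessel inequality `∑ |tr(E_{α,k} σ) - 1/M|² ≤ M c ‖σ - I/d‖_F² ≤ M c (1 - 1/d)`.
Removing the centring adds `N/M`, and with `N = (d² - 1)/(M - 1)` the sum
`N/M + M c (1 - 1/d)` is exactly the constant in the statement.
-/

open scoped BigOperators ComplexOrder
open Matrix

noncomputable def traceNorm {m n : Type*} [Fintype m] [Fintype n] [DecidableEq n]
    (X : Matrix m n ℂ) : ℝ :=
  (let hA := Matrix.posSemidef_conjTranspose_mul_self X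
   hA.1.eigenvectorUnitary.1 * diagonal (fun i => ((Real.sqrt (hA.1.eigenvalues i) : ℝ) : ℂ)) *
    (star hA.1.eigenvectorUnitary : Matrix n n ℂ)).trace.re

def IsDensityMatrix {ι : Type*} [Fintype ι] (ρ : Matrix ι ι ℂ) : Prop :=
  ρ.PosSemidef ∧ ρ.trace = 1

def IsNMPOVM (d N M : ℕ) (x : ℝ)
    (E : Fin N → Fin M → Matrix (Fin d) (Fin d) ℂ) : Prop :=
  (∀ α k, (E α k).PosSemidef) ∧
  (∀ α, ∑ k, E α k = 1) ∧
  (∀ α k, (E α k).trace = (((d : ℝ) / M : ℝ) : ℂ)) ∧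
  (∀ α k, (E α k * E α k).trace = (x : ℂ)) ∧
  (∀ α k l, k ≠ l → (E α k * E α l).trace =
      ((((d : ℝ) - M * x) / (M * ((M : ℝ) - 1)) : ℝ) : ℂ)) ∧
  (∀ α β k l, α ≠ β → (E α k * E β l).trace = (((d : ℝ) / M ^ 2 : ℝ) : ℂ)) ∧
  ((d : ℝ) / M ^ 2 < x ∧ x ≤ min ((d : ℝ) ^ 2 / M ^ 2) ((d : ℝ) / M))

def IsInfoComplete (d N M : ℕ) : Prop := ((M : ℝ) - 1) * N = (d : ℝ) ^ 2 - 1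
open Kronecker

/-- Partial trace over the second factor. -/
noncomputable def ptraceB {dA dB : ℕ} (ρ : Matrix (Fin dA × Fin dB) (Fin dA × Fin dB) ℂ) :
    Matrix (Fin dA) (Fin dA) ℂ :=
  Matrix.of fun i j => ∑ k, ρ (i, k) (j, k)

/-- Partial trace over the first factor. -/
noncomputable def ptraceA {dA dB : ℕ} (ρ : Matrix (Fin dA × Fin dB) (Fin dA × Fin dB) ℂ) :
    Matrix (Fin dB) (Fin dB) ℂ :=
  Matrix.of fun i j => ∑ k, ρ (k, i) (k, j)

/-- A bipartite state is separable if it is a finite convex combination of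
tensor products of local density matrices. -/
def SeparableState {dA dB : ℕ} (ρ : Matrix (Fin dA × Fin dB) (Fin dA × Fin dB) ℂ) : Prop :=
  ∃ (K : ℕ) (p : Fin K → ℝ) (ρA : Fin K → Matrix (Fin dA) (Fin dA) ℂ)
    (ρB : Fin K → Matrix (Fin dB) (Fin dB) ℂ),
    (∀ i, 0 ≤ p i) ∧ (∑ i, p i = 1) ∧
    (∀ i, IsDensityMatrix (ρA i)) ∧ (∀ i, IsDensityMatrix (ρB i)) ∧
    ρ = ∑ i, (p i : ℂ) • (ρA i ⊗ₖ ρB i)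

open scoped Matrix.Norms.Frobenius

section
variable {𝕜 m n : Type*} [RCLike 𝕜] [Fintype m] [Fintype n]

theorem Matrix.frobenius_norm_sq (A : Matrix m n 𝕜) : ‖A‖ ^ 2 = ∑ i, ∑ j, ‖A i j‖ ^ 2 := by
  rw [Matrix.frobenius_norm_def, ← Real.rpow_natCast, ← Real.rpow_mul (by positivity)]
  norm_num

theorem Matrix.sum_norm_toEuclideanLin_sq_le [DecidableEq n] {ι : Type*} [Fintype ι]
    {v : ι → EuclideanSpace 𝕜 n} (hv : Orthonormal 𝕜 v) (B : Matrix m n 𝕜) :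
    ∑ j, ‖toEuclideanLin B (v j)‖ ^ 2 ≤ ‖B‖ ^ 2 := by
  have hrow (i : m) (j : ι) :
      (toEuclideanLin B (v j)) i = inner 𝕜 (WithLp.toLp 2 (star (B i))) (v j) := by
    rw [EuclideanSpace.inner_eq_star_dotProduct, dotProduct_comm]
    simp [toLpLin_apply, mulVec]
  calc ∑ j, ‖toEuclideanLin B (v j)‖ ^ 2
      = ∑ i, ∑ j, ‖inner 𝕜 (v j) (WithLp.toLp 2 (star (B i)))‖ ^ 2 := by
        simp only [EuclideanSpace.norm_sq_eq, hrow, norm_inner_symm]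
        exact Finset.sum_comm
    _ ≤ ∑ i, ‖WithLp.toLp 2 (star (B i))‖ ^ 2 :=
        Finset.sum_le_sum fun i _ => hv.sum_inner_products_le _
    _ = ‖B‖ ^ 2 := by simp [EuclideanSpace.norm_sq_eq, frobenius_norm_sq]

theorem Matrix.sum_re_inner_mul_le {p : Type*} [Fintype p] [DecidableEq n] {ι : Type*}
    [Fintype ι] {w : ι → EuclideanSpace 𝕜 m} {v : ι → EuclideanSpace 𝕜 n}
    (hw : Orthonormal 𝕜 w) (hv : Orthonormal 𝕜 v) (A : Matrix m p 𝕜) (B : Matrix p n 𝕜) :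
    ∑ j, RCLike.re (inner 𝕜 (w j) (toEuclideanLin (A * B) (v j))) ≤ ‖A‖ * ‖B‖ := by
  classical
  have hadj (j : ι) : inner 𝕜 (w j) (toEuclideanLin (A * B) (v j)) =
      inner 𝕜 (toEuclideanLin Aᴴ (w j)) (toEuclideanLin B (v j)) := by
    rw [toLpLin_mul, LinearMap.comp_apply, toEuclideanLin_conjTranspose_eq_adjoint,
      LinearMap.adjoint_inner_left]
  calc ∑ j, RCLike.re (inner 𝕜 (w j) (toEuclideanLin (A * B) (v j)))
      ≤ ∑ j, ‖toEuclideanLin Aᴴ (w j)‖ * ‖toEuclideanLin B (v j)‖ :=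
        Finset.sum_le_sum fun j _ => hadj j ▸ re_inner_le_norm _ _
    _ ≤ √(∑ j, ‖toEuclideanLin Aᴴ (w j)‖ ^ 2) * √(∑ j, ‖toEuclideanLin B (v j)‖ ^ 2) :=
        Real.sum_mul_le_sqrt_mul_sqrt _ _ _
    _ ≤ √(‖Aᴴ‖ ^ 2) * √(‖B‖ ^ 2) := by
        gcongr
        · exact sum_norm_toEuclideanLin_sq_le hw Aᴴ
        · exact sum_norm_toEuclideanLin_sq_le hv B
    _ = ‖A‖ * ‖B‖ := by
        rw [Real.sqrt_sq (norm_nonneg _), Real.sqrt_sq (norm_nonneg _),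
          frobenius_norm_conjTranspose]

theorem Matrix.inner_toEuclideanLin_eigenvectorBasis [DecidableEq n] (X : Matrix m n 𝕜)
    (j k : n) :
    inner 𝕜 (toEuclideanLin X ((isHermitian_conjTranspose_mul_self X).eigenvectorBasis j))
      (toEuclideanLin X ((isHermitian_conjTranspose_mul_self X).eigenvectorBasis k)) =
      if j = k then ((isHermitian_conjTranspose_mul_self X).eigenvalues j : 𝕜) else 0 := by
  classical
  set hX := isHermitian_conjTranspose_mul_self X
  rw [← LinearMap.adjoint_inner_right, ← toEuclideanLin_conjTranspose_eq_adjoint,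
    ← LinearMap.comp_apply, ← toLpLin_mul, toLpLin_apply, hX.mulVec_eigenvectorBasis,
    WithLp.toLp_smul, WithLp.toLp_ofLp, RCLike.real_smul_eq_coe_smul (K := 𝕜), inner_smul_right,
    orthonormal_iff_ite.mp hX.eigenvectorBasis.orthonormal]
  split_ifs with h <;> simp [h]

/-- This is `0` when the singular value `√μⱼ` vanishes, since `0⁻¹ = 0`. -/
noncomputable def Matrix.leftSingularVector [DecidableEq n] (X : Matrix m n 𝕜) (j : n) :
    EuclideanSpace 𝕜 m :=
  ((√((isHermitian_conjTranspose_mul_self X).eigenvalues j) : ℝ) : 𝕜)⁻¹ •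
    toEuclideanLin X ((isHermitian_conjTranspose_mul_self X).eigenvectorBasis j)

theorem Matrix.orthonormal_leftSingularVector [DecidableEq n] (X : Matrix m n 𝕜) :
    Orthonormal 𝕜 fun j : {j // (isHermitian_conjTranspose_mul_self X).eigenvalues j ≠ 0} =>
      X.leftSingularVector j := by
  rw [orthonormal_iff_ite]
  intro j k
  simp only [leftSingularVector, inner_smul_left, inner_smul_right,
    inner_toEuclideanLin_eigenvectorBasis]
  by_cases h : j = k
  · subst h
    set μ := (isHermitian_conjTranspose_mul_self X).eigenvalues j
    have hμ : 0 < μ := (eigenvalues_conjTranspose_mul_self_nonneg X j).lt_of_ne' j.2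
    have hsqrt : ((√μ : ℝ) : 𝕜) ^ 2 = μ := by
      rw [← RCLike.ofReal_pow, Real.sq_sqrt hμ.le]
    have hsqrt0 : ((√μ : ℝ) : 𝕜) ≠ 0 := by exact_mod_cast (Real.sqrt_pos.2 hμ).ne'
    rw [if_pos rfl, if_pos rfl, map_inv₀, RCLike.conj_ofReal]
    field_simp
    exact hsqrt.symm
  · rw [if_neg (Subtype.coe_ne_coe.2 h), if_neg h, mul_zero, mul_zero]

theorem Matrix.re_inner_leftSingularVector [DecidableEq n] (X : Matrix m n 𝕜) (j : n) :
    RCLike.re (inner 𝕜 (X.leftSingularVector j)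
      (toEuclideanLin X ((isHermitian_conjTranspose_mul_self X).eigenvectorBasis j))) =
      √((isHermitian_conjTranspose_mul_self X).eigenvalues j) := by
  rw [leftSingularVector, inner_smul_left, inner_toEuclideanLin_eigenvectorBasis, if_pos rfl,
    map_inv₀, RCLike.conj_ofReal, ← RCLike.ofReal_inv, ← RCLike.ofReal_mul, RCLike.ofReal_re,
    inv_mul_eq_div, Real.div_sqrt]

end

theorem traceNorm_eq_sum_sqrt_eigenvalues {m n : Type*} [Fintype m] [Fintype n] [DecidableEq n]
    (X : Matrix m n ℂ) :
    traceNorm X = ∑ j, √((isHermitian_conjTranspose_mul_self X).eigenvalues j) := by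
  rw [traceNorm, trace_mul_cycle, Unitary.coe_star_mul_self, one_mul, trace_diagonal,
    Complex.re_sum]
  simp

theorem traceNorm_mul_le {m n p : Type*} [Fintype m] [Fintype n] [Fintype p] [DecidableEq n]
    (A : Matrix m p ℂ) (B : Matrix p n ℂ) : traceNorm (A * B) ≤ ‖A‖ * ‖B‖ := by
  classical
  set hX := isHermitian_conjTranspose_mul_self (A * B)
  set v := hX.eigenvectorBasis
  calc traceNorm (A * B) = ∑ j, √(hX.eigenvalues j) := traceNorm_eq_sum_sqrt_eigenvalues _
    _ = ∑ j : {j // hX.eigenvalues j ≠ 0}, √(hX.eigenvalues j) := by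
        rw [← Finset.sum_filter_ne_zero]
        refine Finset.sum_subtype _ (fun j => ?_) _
        rw [Finset.mem_filter_univ, Real.sqrt_ne_zero']
        exact (eigenvalues_conjTranspose_mul_self_nonneg (A * B) j).lt_iff_ne'
    _ = ∑ j : {j // hX.eigenvalues j ≠ 0},
          RCLike.re (inner ℂ ((A * B).leftSingularVector j) (toEuclideanLin (A * B) (v j))) :=
        Finset.sum_congr rfl fun j _ => (re_inner_leftSingularVector _ _).symm
    _ ≤ ‖A‖ * ‖B‖ := sum_re_inner_mul_le (orthonormal_leftSingularVector _)
          (v.orthonormal.comp _ Subtype.val_injective) A B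

section
variable {𝕜 E ι : Type*} [RCLike 𝕜] [NormedAddCommGroup E] [InnerProductSpace 𝕜 E] [Fintype ι]

theorem sum_norm_inner_sq_le_of_norm_sum_smul_sq_le {g : ι → E} {lam : ℝ} (hlam : 0 ≤ lam)
    (hg : ∀ s : ι → 𝕜, ‖∑ i, s i • g i‖ ^ 2 ≤ lam * ∑ i, ‖s i‖ ^ 2) (v : E) :
    ∑ i, ‖inner 𝕜 (g i) v‖ ^ 2 ≤ lam * ‖v‖ ^ 2 := by
  set s : ι → 𝕜 := fun i => inner 𝕜 (g i) v
  set S := ∑ i, ‖s i‖ ^ 2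
  have hS : S ≤ ‖∑ i, s i • g i‖ * ‖v‖ := by
    have : inner 𝕜 (∑ i, s i • g i) v = ((S : ℝ) : 𝕜) := by
      simp only [sum_inner, inner_smul_left, S, RCLike.ofReal_sum, RCLike.ofReal_pow]
      exact Finset.sum_congr rfl fun i _ => RCLike.conj_mul (s i)
    calc S = RCLike.re (inner 𝕜 (∑ i, s i • g i) v) := by rw [this, RCLike.ofReal_re]
      _ ≤ ‖∑ i, s i • g i‖ * ‖v‖ := re_inner_le_norm _ _
  have hS0 : 0 ≤ S := by positivity
  have hsq : S ^ 2 ≤ lam * S * ‖v‖ ^ 2 := by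
    calc S ^ 2 ≤ (‖∑ i, s i • g i‖ * ‖v‖) ^ 2 := pow_le_pow_left₀ hS0 hS 2
      _ = ‖∑ i, s i • g i‖ ^ 2 * ‖v‖ ^ 2 := mul_pow _ _ _
      _ ≤ lam * S * ‖v‖ ^ 2 := by gcongr; exact hg s
  nlinarith [sq_nonneg ‖v‖, mul_nonneg hlam (sq_nonneg ‖v‖)]

theorem norm_sum_smul_sq_le_of_inner_eq [DecidableEq ι] {κ : Type*} [Fintype κ] [DecidableEq κ]
    {g : ι × κ → E} {lam c : ℝ} (hc : 0 ≤ c)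
    (hg : ∀ i j, inner 𝕜 (g i) (g j) =
      if i.1 = j.1 then (if i.2 = j.2 then (lam : 𝕜) else 0) - c else 0)
    (s : ι × κ → 𝕜) :
    ‖∑ i, s i • g i‖ ^ 2 ≤ lam * ∑ i, ‖s i‖ ^ 2 := by
  have h : ‖∑ i, s i • g i‖ ^ 2 =
      lam * ∑ i, ‖s i‖ ^ 2 - c * ∑ a, ‖∑ k, s (a, k)‖ ^ 2 := by
    rw [@norm_sq_eq_re_inner 𝕜]
    simp only [sum_inner, inner_sum, inner_smul_left, inner_smul_right, hg, Fintype.sum_prod_type,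
      mul_ite, mul_zero, Finset.sum_ite_irrel, Finset.sum_const_zero, Finset.sum_ite_eq',
      Finset.mem_univ, if_true, mul_sub, Finset.sum_sub_distrib, ← Finset.sum_mul, ← mul_assoc,
      RCLike.mul_conj, ← map_sum]
    norm_cast
    ring
  rw [h]
  have : 0 ≤ c * ∑ a, ‖∑ k, s (a, k)‖ ^ 2 := by positivity
  linarith

end

theorem Matrix.trace_sub_smul_one_mul_sub_smul_one {n R : Type*} [Fintype n] [DecidableEq n]
    [CommRing R] (X Y : Matrix n n R) (a b : R) :
    ((X - a • 1) * (Y - b • 1)).trace =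
      (X * Y).trace - b * X.trace - a * Y.trace + a * b * Fintype.card n := by
  simp only [sub_mul, mul_sub, Matrix.smul_mul, Matrix.mul_smul, mul_one, one_mul, smul_smul,
    trace_sub, trace_smul, trace_one, smul_eq_mul]
  ring

theorem Matrix.inner_toLp_vec {𝕜 m n : Type*} [RCLike 𝕜] [Fintype m] [Fintype n]
    (X Y : Matrix m n 𝕜) :
    inner 𝕜 (WithLp.toLp 2 (vec X)) (WithLp.toLp 2 (vec Y)) = (Xᴴ * Y).trace := by
  rw [EuclideanSpace.inner_eq_star_dotProduct, dotProduct_comm, ← star_vec_dotProduct_vec]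

theorem Matrix.PosSemidef.re_trace_mul_self_le {n : Type*} [Fintype n] [DecidableEq n]
    {σ : Matrix n n ℂ} (hσ : σ.PosSemidef) : (σ * σ).trace.re ≤ σ.trace.re ^ 2 := by
  have hconj (X : Matrix n n ℂ) :
      (Unitary.conjStarAlgAut ℂ _ hσ.1.eigenvectorUnitary X).trace = X.trace := by
    rw [Unitary.conjStarAlgAut_apply, trace_mul_cycle, Unitary.coe_star_mul_self, one_mul]
  conv_lhs => rw [hσ.1.spectral_theorem, ← map_mul, hconj, diagonal_mul_diagonal, trace_diagonal]
  rw [hσ.1.trace_eq_sum_eigenvalues]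
  simpa [sq] using Finset.sum_sq_le_sq_sum_of_nonneg fun i _ => hσ.eigenvalues_nonneg i

theorem IsDensityMatrix.norm_toLp_vec_sub_smul_one_sq_le {n : Type*} [Fintype n] [DecidableEq n]
    {σ : Matrix n n ℂ} (hσ : IsDensityMatrix σ) :
    ‖WithLp.toLp 2 (vec (σ - (Fintype.card n : ℂ)⁻¹ • 1))‖ ^ 2 ≤ 1 - (Fintype.card n : ℝ)⁻¹ := by
  have hn : (Fintype.card n : ℂ) ≠ 0 := by
    intro h
    have := hσ.2
    rw [Nat.cast_eq_zero, Fintype.card_eq_zero_iff] at h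
    simp [Matrix.trace] at this
  have hpure := hσ.1.re_trace_mul_self_le
  rw [hσ.2, Complex.one_re, one_pow] at hpure
  have hσ₀ : (σ - (Fintype.card n : ℂ)⁻¹ • 1)ᴴ = σ - (Fintype.card n : ℂ)⁻¹ • 1 := by
    simp [hσ.1.1.eq]
  rw [@norm_sq_eq_re_inner ℂ, inner_toLp_vec, hσ₀, trace_sub_smul_one_mul_sub_smul_one, hσ.2,
    show (σ * σ).trace - (Fintype.card n : ℂ)⁻¹ * 1 - (Fintype.card n : ℂ)⁻¹ * 1 +
      (Fintype.card n : ℂ)⁻¹ * (Fintype.card n : ℂ)⁻¹ * Fintype.card n =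
      (σ * σ).trace - (((Fintype.card n : ℝ)⁻¹ : ℝ) : ℂ) by push_cast; field_simp; ring,
    RCLike.re_to_complex, Complex.sub_re, Complex.ofReal_re]
  linarith

theorem Complex.sum_norm_sub_inv_card_sq {κ : Type*} [Fintype κ] {z : κ → ℂ}
    (hz : ∑ k, z k = 1) :
    ∑ k, ‖z k - (Fintype.card κ : ℂ)⁻¹‖ ^ 2 = ∑ k, ‖z k‖ ^ 2 - (Fintype.card κ : ℝ)⁻¹ := by
  have hcard : (Fintype.card κ : ℝ) ≠ 0 := by
    rintro h
    rw [Nat.cast_eq_zero, Fintype.card_eq_zero_iff] at h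
    simp at hz
  have hre : ∑ k, (z k).re = 1 := by rw [← Complex.re_sum, hz, Complex.one_re]
  simp only [Complex.sq_norm, Complex.normSq_sub, Finset.sum_add_distrib, Finset.sum_sub_distrib,
    ← Complex.ofReal_natCast, ← Complex.ofReal_inv, Complex.conj_ofReal, Complex.re_mul_ofReal,
    Complex.normSq_ofReal, ← Finset.sum_mul, ← Finset.mul_sum, hre, Finset.sum_const,
    Finset.card_univ, nsmul_eq_mul]
  field_simp
  ring

section
variable {d N M : ℕ} {x : ℝ} {E : Fin N → Fin M → Matrix (Fin d) (Fin d) ℂ}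

theorem IsNMPOVM.dim_pos (hE : IsNMPOVM d N M x E) : 0 < d := by
  obtain ⟨-, -, -, -, -, -, hlow, hup⟩ := hE
  have := hlow.trans_le (hup.trans (min_le_left _ _))
  by_contra h
  simp_all

theorem IsNMPOVM.one_lt_outcomes (hE : IsNMPOVM d N M x E) : 1 < M := by
  obtain ⟨-, -, -, -, -, -, hlow, hup⟩ := hE
  have := hlow.trans_le (hup.trans (min_le_right _ _))
  by_contra h
  interval_cases M <;> simp at this

theorem IsNMPOVM.sum_trace_mul (hE : IsNMPOVM d N M x E) (σ : Matrix (Fin d) (Fin d) ℂ)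
    (α : Fin N) : ∑ k, (E α k * σ).trace = σ.trace := by
  rw [← trace_sum, ← Matrix.sum_mul, hE.2.1 α, one_mul]

theorem IsNMPOVM.trace_centered_mul_centered (hE : IsNMPOVM d N M x E) (α β : Fin N)
    (k l : Fin M) :
    ((E α k - (M : ℂ)⁻¹ • 1) * (E β l - (M : ℂ)⁻¹ • 1)).trace =
      ((if α = β then (if k = l then x - d / M ^ 2 else -((x - d / M ^ 2) / (M - 1))) else 0 :
        ℝ) : ℂ) := by
  have hM : (M : ℂ) ≠ 0 := by have := hE.one_lt_outcomes; positivity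
  have hM1 : (M : ℂ) - 1 ≠ 0 := by
    rw [sub_ne_zero]; exact_mod_cast hE.one_lt_outcomes.ne'
  obtain ⟨-, -, htr, hsq, hsame, hcross, -⟩ := hE
  rw [trace_sub_smul_one_mul_sub_smul_one, htr, htr, Fintype.card_fin]
  split_ifs with hαβ hkl
  · subst hαβ hkl; rw [hsq]; push_cast; field_simp; ring
  · subst hαβ; rw [hsame α k l hkl]; push_cast; field_simp; ring
  · rw [hcross α β k l hαβ]; push_cast; field_simp; ring

theorem IsNMPOVM.trace_centered_mul_centered_state (hE : IsNMPOVM d N M x E)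
    {σ : Matrix (Fin d) (Fin d) ℂ} (hσ : σ.trace = 1) (α : Fin N) (k : Fin M) :
    ((E α k - (M : ℂ)⁻¹ • 1) * (σ - (d : ℂ)⁻¹ • 1)).trace = (E α k * σ).trace - (M : ℂ)⁻¹ := by
  have hd : (d : ℂ) ≠ 0 := by have := hE.dim_pos; positivity
  rw [trace_sub_smul_one_mul_sub_smul_one, hE.2.2.1, hσ, Fintype.card_fin]
  push_cast
  field_simp
  ring

theorem IsNMPOVM.sum_norm_trace_mul_sq_eq (hE : IsNMPOVM d N M x E)
    {σ : Matrix (Fin d) (Fin d) ℂ} (hσ : σ.trace = 1) :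
    ∑ q : Fin N × Fin M, ‖(E q.1 q.2 * σ).trace‖ ^ 2 =
      ∑ q : Fin N × Fin M, ‖(E q.1 q.2 * σ).trace - (M : ℂ)⁻¹‖ ^ 2 + N / M := by
  have hcentered (α : Fin N) :=
    Complex.sum_norm_sub_inv_card_sq ((hE.sum_trace_mul σ α).trans hσ)
  simp only [Fintype.card_fin] at hcentered
  simp only [Fintype.sum_prod_type, hcentered, Finset.sum_sub_distrib, Finset.sum_const,
    Finset.card_univ, Fintype.card_fin, nsmul_eq_mul]
  ring

theorem IsNMPOVM.sum_norm_trace_mul_sq_le (hE : IsNMPOVM d N M x E)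
    (hIC : IsInfoComplete d N M) {σ : Matrix (Fin d) (Fin d) ℂ} (hσ : IsDensityMatrix σ) :
    ∑ q : Fin N × Fin M, ‖(E q.1 q.2 * σ).trace‖ ^ 2 ≤
      ((d : ℝ) - 1) * ((d : ℝ) ^ 2 + (M : ℝ) ^ 2 * x) / ((d : ℝ) * M * ((M : ℝ) - 1)) := by
  have hd : (0 : ℝ) < d := by exact_mod_cast hE.dim_pos
  have hM : (1 : ℝ) < M := by exact_mod_cast hE.one_lt_outcomes
  set c := (x - d / M ^ 2) / (M - 1) with hc_def
  have hc : 0 < c := div_pos (sub_pos.2 hE.2.2.2.2.2.2.1) (by linarith)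
  have hlam : 0 ≤ M * c := mul_nonneg (by positivity) hc.le
  set g : Fin N × Fin M → EuclideanSpace ℂ (Fin d × Fin d) :=
    fun q => WithLp.toLp 2 (vec (E q.1 q.2 - (M : ℂ)⁻¹ • 1))
  set v : EuclideanSpace ℂ (Fin d × Fin d) := WithLp.toLp 2 (vec (σ - (d : ℂ)⁻¹ • 1))
  have hG (q : Fin N × Fin M) : (E q.1 q.2 - (M : ℂ)⁻¹ • 1)ᴴ = E q.1 q.2 - (M : ℂ)⁻¹ • 1 := by
    simp [(hE.1 q.1 q.2).1.eq]
  have hgram (i j : Fin N × Fin M) : inner ℂ (g i) (g j) =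
      if i.1 = j.1 then (if i.2 = j.2 then ((M * c : ℝ) : ℂ) else 0) - c else 0 := by
    rw [inner_toLp_vec, hG, hE.trace_centered_mul_centered]
    have hsame : x - d / M ^ 2 = M * c - c := by
      rw [hc_def]; field_simp [(by linarith : (M : ℝ) - 1 ≠ 0)]
    split_ifs
    · rw [hsame]; push_cast; ring
    · rw [← hc_def]; push_cast; ring
    · rfl
  have hinner (q : Fin N × Fin M) : inner ℂ (g q) v = (E q.1 q.2 * σ).trace - (M : ℂ)⁻¹ := by
    rw [inner_toLp_vec, hG, hE.trace_centered_mul_centered_state hσ.2]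
  have hv := hσ.norm_toLp_vec_sub_smul_one_sq_le
  rw [Fintype.card_fin] at hv
  have hN : (N : ℝ) = ((d : ℝ) ^ 2 - 1) / (M - 1) := by
    rw [eq_div_iff (by linarith), mul_comm]; exact hIC
  calc ∑ q : Fin N × Fin M, ‖(E q.1 q.2 * σ).trace‖ ^ 2
      = ∑ q, ‖inner ℂ (g q) v‖ ^ 2 + N / M := by
        simp only [hE.sum_norm_trace_mul_sq_eq hσ.2, hinner]
    _ ≤ M * c * (1 - (d : ℝ)⁻¹) + N / M := by
        gcongr
        exact (sum_norm_inner_sq_le_of_norm_sum_smul_sq_le hlam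
          (norm_sum_smul_sq_le_of_inner_eq hc.le hgram) v).trans
          (mul_le_mul_of_nonneg_left hv hlam)
    _ = ((d : ℝ) - 1) * ((d : ℝ) ^ 2 + (M : ℝ) ^ 2 * x) / ((d : ℝ) * M * ((M : ℝ) - 1)) := by
        rw [hN, hc_def]
        field_simp
        ring

end

theorem Matrix.trace_kronecker_mul_sum_smul_kronecker {R m n K : Type*} [CommRing R] [Fintype m]
    [Fintype n] [Fintype K] (X : Matrix m m R) (Y : Matrix n n R) (w : K → R)
    (ρA : K → Matrix m m R) (ρB : K → Matrix n n R) :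
    ((X ⊗ₖ Y) * ∑ i, w i • (ρA i ⊗ₖ ρB i)).trace =
      ∑ i, w i * (X * ρA i).trace * (Y * ρB i).trace := by
  simp only [Matrix.mul_sum, Matrix.mul_smul, trace_sum, trace_smul, ← mul_kronecker_mul,
    trace_kronecker, smul_eq_mul, mul_assoc]

theorem Matrix.frobenius_norm_sq_of_sqrt_mul_le {ι K : Type*} [Fintype ι] [Fintype K]
    {p : K → ℝ} (hp : ∀ i, 0 ≤ p i) (hp1 : ∑ i, p i = 1) {f : K → ι → ℂ} {C : ℝ}
    (hf : ∀ i, ∑ q, ‖f i q‖ ^ 2 ≤ C) :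
    ‖(of fun q i => (√(p i) : ℂ) * f i q : Matrix ι K ℂ)‖ ^ 2 ≤ C := by
  rw [frobenius_norm_sq, Finset.sum_comm]
  calc ∑ i, ∑ q, ‖(of fun q i => (√(p i) : ℂ) * f i q : Matrix ι K ℂ) q i‖ ^ 2
      = ∑ i, p i * ∑ q, ‖f i q‖ ^ 2 := by
        simp only [of_apply, norm_mul, mul_pow, Complex.norm_real, Real.norm_eq_abs, sq_abs,
          Real.sq_sqrt (hp _), Finset.mul_sum]
    _ ≤ ∑ i, p i * C := Finset.sum_le_sum fun i _ => mul_le_mul_of_nonneg_left (hf i) (hp i)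
    _ = C := by rw [← Finset.sum_mul, hp1, one_mul]

theorem separability_criterion_correlation_matrix_general
    (dA dB NA MA NB MB : ℕ) (xA xB : ℝ)
    (EA : Fin NA → Fin MA → Matrix (Fin dA) (Fin dA) ℂ)
    (EB : Fin NB → Fin MB → Matrix (Fin dB) (Fin dB) ℂ)
    (hEA : IsNMPOVM dA NA MA xA EA) (hICA : IsInfoComplete dA NA MA)
    (hEB : IsNMPOVM dB NB MB xB EB) (hICB : IsInfoComplete dB NB MB)
    (ρ : Matrix (Fin dA × Fin dB) (Fin dA × Fin dB) ℂ)
    (hsep : SeparableState ρ) :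
    traceNorm (Matrix.of fun (p : Fin NA × Fin MA) (q : Fin NB × Fin MB) =>
        ((EA p.1 p.2 ⊗ₖ EB q.1 q.2) * ρ).trace) ≤
    Real.sqrt (
      (((dA : ℝ) - 1) * ((dA : ℝ) ^ 2 + (MA : ℝ) ^ 2 * xA) /
          ((dA : ℝ) * MA * ((MA : ℝ) - 1))) *
      (((dB : ℝ) - 1) * ((dB : ℝ) ^ 2 + (MB : ℝ) ^ 2 * xB) /
          ((dB : ℝ) * MB * ((MB : ℝ) - 1)))) := by
  obtain ⟨K, p, ρA, ρB, hp, hp1, hρA, hρB, rfl⟩ := hsep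
  set A : Matrix (Fin NA × Fin MA) (Fin K) ℂ :=
    of fun q i => (√(p i) : ℂ) * (EA q.1 q.2 * ρA i).trace
  set B : Matrix (Fin NB × Fin MB) (Fin K) ℂ :=
    of fun r i => (√(p i) : ℂ) * (EB r.1 r.2 * ρB i).trace
  have hAB : (of fun q r => ((EA q.1 q.2 ⊗ₖ EB r.1 r.2) *
      ∑ i, (p i : ℂ) • (ρA i ⊗ₖ ρB i)).trace) = A * Bᵀ := by
    ext q r
    simp only [of_apply, mul_apply, transpose_apply, trace_kronecker_mul_sum_smul_kronecker, A, B]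
    refine Finset.sum_congr rfl fun i _ => ?_
    rw [show (p i : ℂ) = (√(p i) : ℂ) * (√(p i) : ℂ) by
      rw [← Complex.ofReal_mul, Real.mul_self_sqrt (hp i)]]
    ring
  have hA : ‖A‖ ^ 2 ≤ _ := frobenius_norm_sq_of_sqrt_mul_le hp hp1 fun i =>
    hEA.sum_norm_trace_mul_sq_le hICA (hρA i)
  have hB : ‖B‖ ^ 2 ≤ _ := frobenius_norm_sq_of_sqrt_mul_le hp hp1 fun i =>
    hEB.sum_norm_trace_mul_sq_le hICB (hρB i)
  rw [hAB]
  calc traceNorm (A * Bᵀ) ≤ ‖A‖ * ‖Bᵀ‖ := traceNorm_mul_le A Bᵀ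
    _ = √(‖A‖ ^ 2 * ‖B‖ ^ 2) := by
        rw [frobenius_norm_transpose, Real.sqrt_mul (sq_nonneg _), Real.sqrt_sq (norm_nonneg _),
          Real.sqrt_sq (norm_nonneg _)]
    _ ≤ _ := Real.sqrt_le_sqrt (mul_le_mul hA hB (sq_nonneg _) ((sq_nonneg _).trans hA))

/-- for a separable bipartite state ρ_AB and informationally
complete (N_A,M_A)- and (N_B,M_B)-POVMs on the two subsystems, the matrix
P(ρ_AB) with entries tr((E^A_{α,k} ⊗ E^B_{β,l}) ρ_AB) satisfies
‖P(ρ_AB)‖_tr ≤ √(((d_A−1)(d_A²+M_A²x_A)/(d_A M_A(M_A−1)))·((d_B−1)(d_B²+M_B²x_B)/(d_B M_B(M_B−1)))). -/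
theorem separability_criterion_correlation_matrix
    (dA dB NA MA NB MB : ℕ) (xA xB : ℝ)
    (EA : Fin NA → Fin MA → Matrix (Fin dA) (Fin dA) ℂ)
    (EB : Fin NB → Fin MB → Matrix (Fin dB) (Fin dB) ℂ)
    (hEA : IsNMPOVM dA NA MA xA EA) (hICA : IsInfoComplete dA NA MA)
    (hEB : IsNMPOVM dB NB MB xB EB) (hICB : IsInfoComplete dB NB MB)
    (ρ : Matrix (Fin dA × Fin dB) (Fin dA × Fin dB) ℂ)
    (hρ : IsDensityMatrix ρ) (hsep : SeparableState ρ) :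
    traceNorm (Matrix.of fun (p : Fin NA × Fin MA) (q : Fin NB × Fin MB) =>
        ((EA p.1 p.2 ⊗ₖ EB q.1 q.2) * ρ).trace) ≤
    Real.sqrt (
      (((dA : ℝ) - 1) * ((dA : ℝ) ^ 2 + (MA : ℝ) ^ 2 * xA) /
          ((dA : ℝ) * MA * ((MA : ℝ) - 1))) *
      (((dB : ℝ) - 1) * ((dB : ℝ) ^ 2 + (MB : ℝ) ^ 2 * xB) /
          ((dB : ℝ) * MB * ((MB : ℝ) - 1)))) :=
  separability_criterion_correlation_matrix_general dA dB NA MA NB MB xA xB EA EB hEA hICA hEB hICB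
    ρ hsep
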